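/- Let d ≥ 1 and n ≥ 1 be integers and 0 < Δ ≤ 1 a real number. Let v_1,…,v_n and w_1,…,w_n be vectors in ℝ^d such that ‖v_i‖_∞ ≤ 1, ‖w_i‖_∞ ≤ 1, and ‖v_i − w_i‖_∞ ≤ Δ for all i. Let A and B be the n×n Gram matrices A_{i,j} = ⟨v_i, v_j⟩ and B_{i,j} = ⟨w_i, w_j⟩. Then for every subset S ⊆ {1,…,n} with |S| ≤ d, one has |det(A_S) − det(B_S)| ≤ 3 · d^{2d+1} · Δ. -/

import Mathlib

/-!
The determinant of an `m × m` matrix is a signed sum of `m!` products of `m` entries, and changing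
each of `m` factors bounded by `M` by at most `δ` changes their product by at most `m M^(m-1) δ`
(telescoping one factor at a time). The Gram matrices of `d`-dimensional vectors with coordinates
in `[-1, 1]` have entries bounded by `d`, and entries of `A` and `B` differ by at most `2 d Δ`;
for `m ≤ d` this gives `m! · m d^(m-1) · 2 d Δ ≤ 2 d^(2d+1) Δ`.
-/

noncomputable def principalDet {ι : Type*} [DecidableEq ι] (A : Matrix ι ι ℝ) (S : Finset ι) : ℝ :=
  (A.submatrix (fun i : S => (i : ι)) (fun j : S => (j : ι))).det

open Finset

theorem abs_prod_sub_prod_le {ι : Type*} (s : Finset ι) {a b : ι → ℝ} {M δ : ℝ}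
    (ha : ∀ i ∈ s, |a i| ≤ M) (hb : ∀ i ∈ s, |b i| ≤ M) (hab : ∀ i ∈ s, |a i - b i| ≤ δ) :
    |∏ i ∈ s, a i - ∏ i ∈ s, b i| ≤ #s * M ^ (#s - 1) * δ := by
  classical
  induction s using Finset.induction_on with
  | empty => simp
  | @insert x s hx ih =>
    have hax := ha x (mem_insert_self x s)
    have habx := hab x (mem_insert_self x s)
    have ih := ih (fun i hi => ha i (mem_insert_of_mem hi)) (fun i hi => hb i (mem_insert_of_mem hi))
      (fun i hi => hab i (mem_insert_of_mem hi))
    have hM : 0 ≤ M := (abs_nonneg _).trans hax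
    have hprod_b : |∏ i ∈ s, b i| ≤ M ^ #s := by
      rw [abs_prod]
      calc ∏ i ∈ s, |b i| ≤ ∏ _i ∈ s, M :=
            prod_le_prod (fun _ _ => abs_nonneg _) fun i hi => hb i (mem_insert_of_mem hi)
        _ = M ^ #s := prod_const M
    have hpow : (#s : ℝ) * (M * M ^ (#s - 1)) = #s * M ^ #s := by
      rcases Nat.eq_zero_or_pos #s with h | h
      · simp [h]
      · rw [mul_pow_sub_one h.ne']
    rw [prod_insert hx, prod_insert hx, card_insert_of_notMem hx, Nat.add_sub_cancel]
    calc |a x * ∏ i ∈ s, a i - b x * ∏ i ∈ s, b i|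
        = |a x * (∏ i ∈ s, a i - ∏ i ∈ s, b i) + (a x - b x) * ∏ i ∈ s, b i| := by ring_nf
      _ ≤ |a x| * |∏ i ∈ s, a i - ∏ i ∈ s, b i| + |a x - b x| * |∏ i ∈ s, b i| := by
        rw [← abs_mul, ← abs_mul]; exact abs_add_le _ _
      _ ≤ M * (#s * M ^ (#s - 1) * δ) + δ * M ^ #s := by
        gcongr
        exact (abs_nonneg _).trans habx
      _ = (#s + 1 : ℕ) * M ^ #s * δ := by push_cast; linear_combination δ * hpow

theorem abs_det_sub_det_le {ι : Type*} [Fintype ι] [DecidableEq ι] {A B : Matrix ι ι ℝ}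
    {M δ : ℝ} (hA : ∀ i j, |A i j| ≤ M) (hB : ∀ i j, |B i j| ≤ M)
    (hAB : ∀ i j, |A i j - B i j| ≤ δ) :
    |A.det - B.det| ≤
      (Fintype.card ι).factorial * (Fintype.card ι * M ^ (Fintype.card ι - 1) * δ) := by
  rw [Matrix.det_apply', Matrix.det_apply', ← sum_sub_distrib]
  calc |∑ σ : Equiv.Perm ι, ((Equiv.Perm.sign σ : ℤ) * ∏ i, A (σ i) i
          - (Equiv.Perm.sign σ : ℤ) * ∏ i, B (σ i) i : ℝ)|
      ≤ ∑ σ : Equiv.Perm ι, |∏ i, A (σ i) i - ∏ i, B (σ i) i| := by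
        refine (abs_sum_le_sum_abs _ _).trans (sum_le_sum fun σ _ => ?_)
        rw [← mul_sub, abs_mul, ← Int.cast_abs, Equiv.Perm.sign_abs, Int.cast_one, one_mul]
    _ ≤ (Fintype.card ι).factorial * (Fintype.card ι * M ^ (Fintype.card ι - 1) * δ) := by
        refine (sum_le_card_nsmul _ _ _ fun σ _ =>
          abs_prod_sub_prod_le univ (fun _ _ => hA _ _) (fun _ _ => hB _ _)
            (fun _ _ => hAB _ _)).trans_eq ?_
        simp only [card_univ, Fintype.card_perm, nsmul_eq_mul]

theorem abs_dotProduct_le {ι : Type*} [Fintype ι] {x y : ι → ℝ} {a b : ℝ}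
    (hx : ∀ e, |x e| ≤ a) (hy : ∀ e, |y e| ≤ b) :
    |x ⬝ᵥ y| ≤ Fintype.card ι * (a * b) := by
  refine (abs_sum_le_sum_abs _ _).trans ((sum_le_card_nsmul _ _ (a * b) fun e _ => ?_).trans_eq ?_)
  · rw [abs_mul]
    exact mul_le_mul (hx e) (hy e) (abs_nonneg _) ((abs_nonneg _).trans (hx e))
  · rw [card_univ, nsmul_eq_mul]

theorem abs_dotProduct_sub_dotProduct_le {ι : Type*} [Fintype ι] {x y x' y' : ι → ℝ} {a b δ : ℝ}
    (hx : ∀ e, |x e| ≤ a) (hy' : ∀ e, |y' e| ≤ b)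
    (hxx' : ∀ e, |x e - x' e| ≤ δ) (hyy' : ∀ e, |y e - y' e| ≤ δ) :
    |x ⬝ᵥ y - x' ⬝ᵥ y'| ≤ Fintype.card ι * ((a + b) * δ) := by
  have hsplit : x ⬝ᵥ y - x' ⬝ᵥ y' = x ⬝ᵥ (y - y') + (x - x') ⬝ᵥ y' := by
    rw [dotProduct_sub, sub_dotProduct]; ring
  rw [hsplit]
  calc |x ⬝ᵥ (y - y') + (x - x') ⬝ᵥ y'|
      ≤ Fintype.card ι * (a * δ) + Fintype.card ι * (δ * b) :=
        (abs_add_le _ _).trans (add_le_add (abs_dotProduct_le hx hyy') (abs_dotProduct_le hxx' hy'))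
    _ = Fintype.card ι * ((a + b) * δ) := by ring

theorem factorial_mul_mul_pow_sub_one_le {k d : ℕ} (hd : 1 ≤ d) (hk : k ≤ d) :
    k.factorial * (k * d ^ (k - 1)) ≤ d ^ (2 * d) := by
  have hfact : k.factorial ≤ d ^ d :=
    (Nat.factorial_le_pow k).trans ((Nat.pow_le_pow_left hk k).trans (Nat.pow_le_pow_right hd hk))
  have hlin : k * d ^ (k - 1) ≤ d ^ d := by
    refine le_trans ?_ (Nat.pow_le_pow_right hd hk)
    rcases k with _ | k
    · simp
    · calc (k + 1) * d ^ k ≤ d * d ^ k := Nat.mul_le_mul_right _ hk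
        _ = d ^ (k + 1) := by ring
  calc k.factorial * (k * d ^ (k - 1)) ≤ d ^ d * d ^ d := Nat.mul_le_mul hfact hlin
    _ = d ^ (2 * d) := by ring

theorem stmt_15_general (d n : ℕ) (hd : 1 ≤ d)
    (Δ : ℝ) (hΔ0 : 0 < Δ)
    (v w : Fin n → Fin d → ℝ)
    (hv : ∀ i e, |v i e| ≤ 1) (hw : ∀ i e, |w i e| ≤ 1)
    (hvw : ∀ i e, |v i e - w i e| ≤ Δ)
    (A B : Matrix (Fin n) (Fin n) ℝ)
    (hA : ∀ i j, A i j = ∑ e, v i e * v j e)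
    (hB : ∀ i j, B i j = ∑ e, w i e * w j e) :
    ∀ S : Finset (Fin n), S.card ≤ d →
      |principalDet A S - principalDet B S| ≤ 3 * (d : ℝ) ^ (2 * d + 1) * Δ := by
  intro S hS
  have hA_le : ∀ i j, |A i j| ≤ d := fun i j => by
    simpa [hA, dotProduct] using abs_dotProduct_le (hv i) (hv j)
  have hB_le : ∀ i j, |B i j| ≤ d := fun i j => by
    simpa [hB, dotProduct] using abs_dotProduct_le (hw i) (hw j)
  have hAB_le : ∀ i j, |A i j - B i j| ≤ d * (2 * Δ) := fun i j => by
    simpa [hA, hB, dotProduct, one_add_one_eq_two] using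
      abs_dotProduct_sub_dotProduct_le (hv i) (hw j) (hvw i) (hvw j)
  have hdet := abs_det_sub_det_le (A := A.submatrix ((↑) : S → Fin n) (↑))
    (B := B.submatrix ((↑) : S → Fin n) (↑)) (fun _ _ => hA_le _ _) (fun _ _ => hB_le _ _)
    (fun _ _ => hAB_le _ _)
  have hcount : (S.card.factorial * (S.card * d ^ (S.card - 1)) : ℝ) ≤ d ^ (2 * d) :=
    mod_cast factorial_mul_mul_pow_sub_one_le hd hS
  rw [Fintype.card_coe] at hdet
  calc |principalDet A S - principalDet B S|
      ≤ S.card.factorial * (S.card * d ^ (S.card - 1)) * (2 * d * Δ) := by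
        refine hdet.trans_eq ?_; ring
    _ ≤ d ^ (2 * d) * (3 * d * Δ) := by gcongr; norm_num
    _ = 3 * (d : ℝ) ^ (2 * d + 1) * Δ := by ring

theorem stmt_15 (d n : ℕ) (hd : 1 ≤ d) (hn : 1 ≤ n)
    (Δ : ℝ) (hΔ0 : 0 < Δ) (hΔ1 : Δ ≤ 1)
    (v w : Fin n → Fin d → ℝ)
    (hv : ∀ i e, |v i e| ≤ 1) (hw : ∀ i e, |w i e| ≤ 1)
    (hvw : ∀ i e, |v i e - w i e| ≤ Δ)
    (A B : Matrix (Fin n) (Fin n) ℝ)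
    (hA : ∀ i j, A i j = ∑ e, v i e * v j e)
    (hB : ∀ i j, B i j = ∑ e, w i e * w j e) :
    ∀ S : Finset (Fin n), S.card ≤ d →
      |principalDet A S - principalDet B S| ≤ 3 * (d : ℝ) ^ (2 * d + 1) * Δ :=
  stmt_15_general d n hd Δ hΔ0 v w hv hw hvw A B hA hB
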